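/- arXiv:1603.06970 — 3 statements merged into one kernel-verified Lean document; each statement's English description precedes it below -/
import Mathlib

section
/- Let M_f, M_r, G_+, G_−, X₀, A₁, B₁ be complex numbers with M_f, M_r, G_+, G_−, β nonzero, where α = (1+M_f+M_r)/M_f, β = (1+M_f+M_r)/M_r, G_+² − β G_+ + M_f/M_r = 0 and G_−² − α G_− + M_r/M_f = 0. If X₁ = A₁ + B₁, X₂ = G_+ A₁ + G_−⁻¹ B₁, and X₁ = X₀/α + X₂/β (the first-agent equation), and additionally 1 − G_+/β ≠ 0, then A₁ = G_+ X₀ − G_+ G_− B₁. -/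
/-!
In terms of `α = (1+Mf+Mr)/Mf` and `β = (1+Mf+Mr)/Mr` the two wave quadratics read
`G₊² - β G₊ + β/α = 0` and `G₋² - α G₋ + α/β = 0`, i.e. `α⁻¹ = G₊ (1 - G₊/β)` and
`β⁻¹ = G₋ (1 - G₋/α)`. Substituting these into the first-agent equation turns it into
`(1 - G₊/β) A₁ = (1 - G₊/β) G₊ (X₀ - G₋ B₁)`, and `1 - G₊/β` cancels.
-/

section LeaderReflection

variable {K : Type*} [Field K]

theorem inv_eq_mul_one_sub_div_of_sq_sub_mul_add_div_eq_zero {p q G : K} (hp : p ≠ 0)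
    (h : G ^ 2 - p * G + p / q = 0) : q⁻¹ = G * (1 - G / p) := by
  rw [div_eq_mul_inv] at h
  field_simp
  linear_combination h

theorem leader_reflection {α β Gp Gm X0 A1 B1 : K} (hα : α ≠ 0) (hβ : β ≠ 0) (hGm : Gm ≠ 0)
    (hquadp : Gp ^ 2 - β * Gp + β / α = 0) (hquadm : Gm ^ 2 - α * Gm + α / β = 0)
    (hagent : A1 + B1 = X0 / α + (Gp * A1 + Gm⁻¹ * B1) / β) (hden : 1 - Gp / β ≠ 0) :
    A1 = Gp * X0 - Gp * Gm * B1 := by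
  have hαinv : α⁻¹ = Gp * (1 - Gp / β) :=
    inv_eq_mul_one_sub_div_of_sq_sub_mul_add_div_eq_zero hβ hquadp
  have hGmβ : Gm⁻¹ / β = 1 - Gm / α := by
    rw [div_eq_mul_inv, inv_eq_mul_one_sub_div_of_sq_sub_mul_add_div_eq_zero hα hquadm,
      inv_mul_cancel_left₀ hGm]
  refine mul_left_cancel₀ hden ?_
  linear_combination hagent + (X0 - Gm * B1) * hαinv + B1 * hGmβ

end LeaderReflection

theorem stmt_3_general (Mf Mr Gp Gm X0 X1 X2 A1 B1 : ℂ)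
    (hf : Mf ≠ 0) (hGm : Gm ≠ 0)
    (hβ : (1 + Mf + Mr) / Mr ≠ 0)
    (hquadp : Gp ^ 2 - ((1 + Mf + Mr) / Mr) * Gp + Mf / Mr = 0)
    (hquadm : Gm ^ 2 - ((1 + Mf + Mr) / Mf) * Gm + Mr / Mf = 0)
    (hX1 : X1 = A1 + B1) (hX2 : X2 = Gp * A1 + Gm⁻¹ * B1)
    (hagent : X1 = X0 / ((1 + Mf + Mr) / Mf) + X2 / ((1 + Mf + Mr) / Mr))
    (hden : 1 - Gp / ((1 + Mf + Mr) / Mr) ≠ 0) :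
    A1 = Gp * X0 - Gp * Gm * B1 := by
  have hs : 1 + Mf + Mr ≠ 0 := (div_ne_zero_iff.mp hβ).1
  rw [← div_div_div_cancel_left' Mr Mf hs] at hquadp
  rw [← div_div_div_cancel_left' Mf Mr hs] at hquadm
  rw [hX1, hX2] at hagent
  exact leader_reflection (div_ne_zero hs hf) hβ hGm hquadp hquadm hagent hden

/-- Reflection at the leader: with `α = (1+Mf+Mr)/Mf`, `β = (1+Mf+Mr)/Mr`, the wave
quadratics for `G₊`, `G₋`, and the first-agent equation `X₁ = X₀/α + X₂/β`,
where `X₁ = A₁ + B₁` and `X₂ = G₊A₁ + G₋⁻¹B₁`, we get `A₁ = G₊X₀ - G₊G₋B₁`. -/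
theorem stmt_3 (Mf Mr Gp Gm X0 X1 X2 A1 B1 : ℂ)
    (hf : Mf ≠ 0) (hr : Mr ≠ 0) (hGp : Gp ≠ 0) (hGm : Gm ≠ 0)
    (hβ : (1 + Mf + Mr) / Mr ≠ 0)
    (hquadp : Gp ^ 2 - ((1 + Mf + Mr) / Mr) * Gp + Mf / Mr = 0)
    (hquadm : Gm ^ 2 - ((1 + Mf + Mr) / Mf) * Gm + Mr / Mf = 0)
    (hX1 : X1 = A1 + B1) (hX2 : X2 = Gp * A1 + Gm⁻¹ * B1)
    (hagent : X1 = X0 / ((1 + Mf + Mr) / Mf) + X2 / ((1 + Mf + Mr) / Mr))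
    (hden : 1 - Gp / ((1 + Mf + Mr) / Mr) ≠ 0) :
    A1 = Gp * X0 - Gp * Gm * B1 :=
  stmt_3_general Mf Mr Gp Gm X0 X1 X2 A1 B1 hf hGm hβ hquadp hquadm hX1 hX2 hagent hden
end

section
/- Let M_f, M_r, G_+, G_− be nonzero complex numbers with α = (1+M_f+M_r)/M_f, β = (1+M_f+M_r)/M_r, G_+² − β G_+ + M_f/M_r = 0, G_−² − α G_− + M_r/M_f = 0, and G_− ≠ 1. If A_N, B_N, X_N satisfy X_N = A_N + B_N and X_N = M_f(G_+⁻¹A_N + G_− B_N − X_N) (the rear-end agent equation with X_{N−1} = G_+⁻¹A_N + G_−B_N), then B_N = G_− (G_+ − 1)/(G_− − 1) · A_N. -/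
/-- Reflection at the rear-end agent: with the wave quadratics for `G₊`, `G₋`,
`G₋ ≠ 1`, `X_N = A_N + B_N` and `X_N = Mf(G₊⁻¹A_N + G₋B_N - X_N)`, we get
`B_N = G₋ (G₊ - 1)/(G₋ - 1) · A_N`. -/
theorem stmt_4 (Mf Mr Gp Gm AN BN XN : ℂ)
    (hf : Mf ≠ 0) (hr : Mr ≠ 0) (hGp : Gp ≠ 0) (hGm : Gm ≠ 0) (hGm1 : Gm ≠ 1)
    (hquadp : Gp ^ 2 - ((1 + Mf + Mr) / Mr) * Gp + Mf / Mr = 0)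
    (hquadm : Gm ^ 2 - ((1 + Mf + Mr) / Mf) * Gm + Mr / Mf = 0)
    (hXN : XN = AN + BN)
    (hagent : XN = Mf * (Gp⁻¹ * AN + Gm * BN - XN)) :
    BN = Gm * (Gp - 1) / (Gm - 1) * AN := by
  subst hXN
  have hGm1' : Gm - 1 ≠ 0 := sub_ne_zero.mpr hGm1
  field_simp at hquadp hquadm hagent ⊢
  have hp : Mr * Gp ^ 2 - (1 + Mf + Mr) * Gp + Mf = 0 := by linear_combination hquadp
  have hm : Mf * Gm ^ 2 - (1 + Mf + Mr) * Gm + Mr = 0 := by linear_combination hquadm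
  have hH : Gp * (1 + Mf) * (AN + BN) - Mf * AN - Mf * Gm * Gp * BN = 0 := by
    linear_combination hagent
  have key : Mr * Gp * ((Gm - 1) * BN) = Mr * Gp * (Gm * (Gp - 1) * AN) := by
    linear_combination (-Gm) * hH - Gm * AN * hp - Gp * BN * hm
  have h := mul_left_cancel₀ (mul_ne_zero hr hGp) key
  linear_combination h
end

section
/- Let x₁, y₁, x₂, y₂ be real numbers, set x = x₁ + x₂, y = y₁ + y₂, and let z = (1 + x² − y² + 2x − 4x₁) + i(2y + 2xy − 4y₁). Suppose 1 + x > 2 and (2(x−1)² − Re z)² − (Re z)² − (Im z)² > 0 and 2(x−1)² − Re z > 0. Then (1 + x) − √((|z| + Re z)/2) > 2. -/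
theorem Complex.norm_lt_of_re_sq_add_im_sq_lt {z : ℂ} {a : ℝ} (ha : 0 ≤ a)
    (h : z.re ^ 2 + z.im ^ 2 < a ^ 2) : ‖z‖ < a := by
  refine lt_of_pow_lt_pow_left₀ 2 ha ?_
  rwa [Complex.sq_norm, Complex.normSq_apply, ← sq, ← sq]

theorem Complex.sqrt_half_norm_add_re_lt {z : ℂ} {c : ℝ} (hc : 0 < c)
    (h : ‖z‖ < 2 * c ^ 2 - z.re) : √((‖z‖ + z.re) / 2) < c := by
  rw [Real.sqrt_lt' hc]
  linarith

theorem stmt_10_general (x₁ x₂ : ℝ)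
    (z : ℂ)
    (hx : 1 + (x₁ + x₂) > 2)
    (hineq : (2 * ((x₁ + x₂) - 1) ^ 2 - z.re) ^ 2 - z.re ^ 2 - z.im ^ 2 > 0)
    (hpos : 2 * ((x₁ + x₂) - 1) ^ 2 - z.re > 0) :
    (1 + (x₁ + x₂)) - Real.sqrt ((‖z‖ + z.re) / 2) > 2 := by
  have hnorm : ‖z‖ < 2 * ((x₁ + x₂) - 1) ^ 2 - z.re :=
    Complex.norm_lt_of_re_sq_add_im_sq_lt hpos.le (by linarith)
  have hsqrt := Complex.sqrt_half_norm_add_re_lt (by linarith) hnorm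
  linarith

/-- Key inequality in the string-instability proof: if `1 + x > 2`,
`(2(x-1)² - Re z)² - (Re z)² - (Im z)² > 0` and `2(x-1)² - Re z > 0`, where
`z = (1 + x² - y² + 2x - 4x₁) + i(2y + 2xy - 4y₁)` with `x = x₁+x₂`, `y = y₁+y₂`,
then `(1 + x) - √((|z| + Re z)/2) > 2`. -/
theorem stmt_10 (x₁ y₁ x₂ y₂ : ℝ)
    (z : ℂ)
    (hz : z = Complex.mk
      (1 + (x₁ + x₂) ^ 2 - (y₁ + y₂) ^ 2 + 2 * (x₁ + x₂) - 4 * x₁)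
      (2 * (y₁ + y₂) + 2 * (x₁ + x₂) * (y₁ + y₂) - 4 * y₁))
    (hx : 1 + (x₁ + x₂) > 2)
    (hineq : (2 * ((x₁ + x₂) - 1) ^ 2 - z.re) ^ 2 - z.re ^ 2 - z.im ^ 2 > 0)
    (hpos : 2 * ((x₁ + x₂) - 1) ^ 2 - z.re > 0) :
    (1 + (x₁ + x₂)) - Real.sqrt ((‖z‖ + z.re) / 2) > 2 :=
  stmt_10_general x₁ x₂ z hx hineq hpos
end
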